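/- Let f, a be the degree-n vortex profiles solving -Δ_r f + b²f + (λ/2)(f²-1)f = 0 and -a'' + a'/r - f²(1-a) = 0 with b = n(1-a)/r, f, f' > 0, and set q(r) = n(1-a(r))f(r)/(r f'(r)). Define l_m = -Δ_r + m²/r² + b² + (λ/2)(f²-1) and M_m = l_m - q l_m q + (λ - q²)f², where q l_m q denotes composition with multiplication by q on both sides. Then M₁ f' = 0. -/

import Mathlib

open Set

private lemma cdAtDeriv {f : ℝ → ℝ} {r : ℝ} (h : ContDiffAt ℝ (⊤ : ℕ∞) f r) :
    ContDiffAt ℝ (⊤ : ℕ∞) (deriv f) r := by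
  rw [contDiffAt_infty] at h ⊢
  intro k
  obtain ⟨u, hu, hcd⟩ := (h (k + 1)).contDiffOn (m := ((k + 1 : ℕ) : WithTop ℕ∞)) le_rfl (by simp)
  have hro : r ∈ interior u := mem_interior_iff_mem_nhds.2 hu
  exact ((hcd.mono interior_subset).deriv_of_isOpen isOpen_interior (by push_cast; rfl)).contDiffAt
    (isOpen_interior.mem_nhds hro)

/-- The scalar operator `l_m = -Δ_r + m²/r² + b² + (λ/2)(f²-1)` with `b = n(1-a)/r`. -/
noncomputable def lop (n : ℕ) (lam m : ℝ) (f a : ℝ → ℝ) (u : ℝ → ℝ) (s : ℝ) : ℝ :=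
  -(deriv (deriv u) s) - deriv u s / s
    + (m^2 / s^2 + ((n:ℝ) * (1 - a s) / s)^2 + lam / 2 * ((f s)^2 - 1)) * u s

/-- `q(r) = n(1-a(r))f(r)/(r f'(r))`. -/
noncomputable def qfun (n : ℕ) (f a : ℝ → ℝ) (s : ℝ) : ℝ :=
  (n:ℝ) * (1 - a s) * f s / (s * deriv f s)

/-- The operator `M_m = l_m - q l_m q + (λ - q²) f²`. -/
noncomputable def Mop (n : ℕ) (lam m : ℝ) (f a : ℝ → ℝ) (u : ℝ → ℝ) (s : ℝ) : ℝ :=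
  lop n lam m f a u s
    - qfun n f a s * lop n lam m f a (fun t => qfun n f a t * u t) s
    + (lam - (qfun n f a s)^2) * (f s)^2 * u s

set_option maxHeartbeats 2000000 in
/-- for the degree-`n` vortex profiles, `M₁ f' = 0` on `(0,∞)`. -/
theorem stmt11 (n : ℕ) (hn : 0 < n) (lam : ℝ) (hlam : 0 < lam) (f a : ℝ → ℝ)
    (hf : ∀ r ∈ Ioi (0:ℝ), ContDiffAt ℝ (⊤ : ℕ∞) f r)
    (ha : ∀ r ∈ Ioi (0:ℝ), ContDiffAt ℝ (⊤ : ℕ∞) a r)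
    (hfpos : ∀ r ∈ Ioi (0:ℝ), 0 < f r)
    (hf' : ∀ r ∈ Ioi (0:ℝ), 0 < deriv f r)
    (hode1 : ∀ r ∈ Ioi (0:ℝ),
      -(deriv (deriv f) r) - deriv f r / r
        + ((n:ℝ) * (1 - a r) / r)^2 * f r
        + lam / 2 * ((f r)^2 - 1) * f r = 0)
    (hode2 : ∀ r ∈ Ioi (0:ℝ),
      -(deriv (deriv a) r) + deriv a r / r - (f r)^2 * (1 - a r) = 0) :
    ∀ r ∈ Ioi (0:ℝ), Mop n lam 1 f a (deriv f) r = 0 := by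
  intro r hr
  have hr0 : (0:ℝ) < r := hr
  have hrne : r ≠ 0 := ne_of_gt hr0
  have Hf : ∀ t ∈ Ioi (0:ℝ), HasDerivAt f (deriv f t) t := fun t ht =>
    ((hf t ht).differentiableAt (by simp)).hasDerivAt
  have Hf1 : ∀ t ∈ Ioi (0:ℝ), HasDerivAt (deriv f) (deriv (deriv f) t) t := fun t ht =>
    ((cdAtDeriv (hf t ht)).differentiableAt (by simp)).hasDerivAt
  have Ha : ∀ t ∈ Ioi (0:ℝ), HasDerivAt a (deriv a t) t := fun t ht =>
    ((ha t ht).differentiableAt (by simp)).hasDerivAt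
  have Ha1 : ∀ t ∈ Ioi (0:ℝ), HasDerivAt (deriv a) (deriv (deriv a) t) t := fun t ht =>
    ((cdAtDeriv (ha t ht)).differentiableAt (by simp)).hasDerivAt
  have hne : ∀ t ∈ Ioi (0:ℝ), t ≠ 0 := fun t ht => ne_of_gt ht
  have hfne : ∀ t ∈ Ioi (0:ℝ), deriv f t ≠ 0 := fun t ht => ne_of_gt (hf' t ht)
  have hmem : Ioi (0:ℝ) ∈ nhds r := Ioi_mem_nhds hr0
  -- third derivative of f
  have heq1 : deriv (deriv f) =ᶠ[nhds r]
      (fun t => -(deriv f t / t) + ((n:ℝ) * (1 - a t) / t)^2 * f t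
        + lam / 2 * ((f t)^2 - 1) * f t) := by
    filter_upwards [hmem] with t ht
    have := hode1 t ht
    linarith
  have hφ' : HasDerivAt
      (fun t => -(deriv f t / t) + ((n:ℝ) * (1 - a t) / t)^2 * f t
        + lam / 2 * ((f t)^2 - 1) * f t)
      (-(deriv (deriv f) r) / r + deriv f r / r^2
        + 2 * ((n:ℝ) * (1 - a r) / r) * (-(n:ℝ) * deriv a r / r - (n:ℝ) * (1 - a r) / r^2) * f r
        + ((n:ℝ) * (1 - a r) / r)^2 * deriv f r
        + lam / 2 * (3 * (f r)^2 - 1) * deriv f r) r := by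
    have h1 := ((Hf1 r hr).div (hasDerivAt_id r) hrne).neg
    have h2 := (((((Ha r hr).const_sub 1).const_mul (n:ℝ)).div (hasDerivAt_id r) hrne).pow 2).mul
      (Hf r hr)
    have h3 := ((((Hf r hr).pow 2).sub_const 1).const_mul (lam / 2)).mul (Hf r hr)
    refine ((h1.add h2).add h3).congr_deriv ?_
    simp only [id, Pi.div_apply, Pi.pow_apply, Pi.mul_apply, Pi.neg_apply, Pi.add_apply, Pi.sub_apply, Nat.cast_ofNat, Nat.reduceSub, pow_one]
    field_simp
    ring
  have E1 : deriv (deriv (deriv f)) r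
      = -(deriv (deriv f) r) / r + deriv f r / r^2
        + 2 * ((n:ℝ) * (1 - a r) / r) * (-(n:ℝ) * deriv a r / r - (n:ℝ) * (1 - a r) / r^2) * f r
        + ((n:ℝ) * (1 - a r) / r)^2 * deriv f r
        + lam / 2 * (3 * (f r)^2 - 1) * deriv f r :=
    heq1.deriv_eq.trans hφ'.deriv
  -- the function q f' equals g := n (1-a) f / t near r
  have heq2 : (fun t => qfun n f a t * deriv f t) =ᶠ[nhds r]
      (fun t => (n:ℝ) * (1 - a t) * f t / t) := by
    filter_upwards [hmem] with t ht
    simp only [qfun]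
    field_simp [hne t ht, hfne t ht]
  -- first derivative of g on Ioi 0
  have hg1 : ∀ t ∈ Ioi (0:ℝ), HasDerivAt (fun t => (n:ℝ) * (1 - a t) * f t / t)
      ((n:ℝ) * (-(deriv a t) * f t + (1 - a t) * deriv f t) / t
        - (n:ℝ) * (1 - a t) * f t / t^2) t := by
    intro t ht
    have h := ((((Ha t ht).const_sub 1).const_mul (n:ℝ)).mul (Hf t ht)).div
      (hasDerivAt_id t) (hne t ht)
    refine h.congr_deriv ?_
    simp only [id, Pi.div_apply, Pi.pow_apply, Pi.mul_apply, Pi.neg_apply, Pi.add_apply, Pi.sub_apply, Nat.cast_ofNat]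
    field_simp [hne t ht]
  have heq3 : deriv (fun t => (n:ℝ) * (1 - a t) * f t / t) =ᶠ[nhds r]
      (fun t => (n:ℝ) * (-(deriv a t) * f t + (1 - a t) * deriv f t) / t
        - (n:ℝ) * (1 - a t) * f t / t^2) := by
    filter_upwards [hmem] with t ht
    exact (hg1 t ht).deriv
  have Eg1 : deriv (fun t => (n:ℝ) * (1 - a t) * f t / t) r
      = (n:ℝ) * (-(deriv a r) * f r + (1 - a r) * deriv f r) / r
        - (n:ℝ) * (1 - a r) * f r / r^2 := (hg1 r hr).deriv
  -- second derivative of g at r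
  have hG1' : HasDerivAt
      (fun t => (n:ℝ) * (-(deriv a t) * f t + (1 - a t) * deriv f t) / t
        - (n:ℝ) * (1 - a t) * f t / t^2)
      ((n:ℝ) * (-(deriv (deriv a) r) * f r - 2 * deriv a r * deriv f r
          + (1 - a r) * deriv (deriv f) r) / r
        - 2 * (n:ℝ) * (-(deriv a r) * f r + (1 - a r) * deriv f r) / r^2
        + 2 * (n:ℝ) * (1 - a r) * f r / r^3) r := by
    have hu := (((Ha1 r hr).neg).mul (Hf r hr)).add (((Ha r hr).const_sub 1).mul (Hf1 r hr))
    have h1 := (hu.const_mul (n:ℝ)).div (hasDerivAt_id r) hrne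
    have h2 := ((((Ha r hr).const_sub 1).const_mul (n:ℝ)).mul (Hf r hr)).div
      (hasDerivAt_pow 2 r) (pow_ne_zero 2 hrne)
    refine (h1.sub h2).congr_deriv ?_
    simp only [id, Pi.div_apply, Pi.pow_apply, Pi.mul_apply, Pi.neg_apply, Pi.add_apply, Pi.sub_apply, Nat.cast_ofNat]
    field_simp
    ring
  have E2 : deriv (deriv (fun t => (n:ℝ) * (1 - a t) * f t / t)) r
      = (n:ℝ) * (-(deriv (deriv a) r) * f r - 2 * deriv a r * deriv f r
          + (1 - a r) * deriv (deriv f) r) / r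
        - 2 * (n:ℝ) * (-(deriv a r) * f r + (1 - a r) * deriv f r) / r^2
        + 2 * (n:ℝ) * (1 - a r) * f r / r^3 := heq3.deriv_eq.trans hG1'.deriv
  -- transfer to q f'
  have Eq2 : deriv (deriv (fun t => qfun n f a t * deriv f t)) r
      = deriv (deriv (fun t => (n:ℝ) * (1 - a t) * f t / t)) r := heq2.deriv.deriv_eq
  have Eq1 : deriv (fun t => qfun n f a t * deriv f t) r
      = deriv (fun t => (n:ℝ) * (1 - a t) * f t / t) r := heq2.deriv_eq
  -- ODE relations at r
  have hF2 : deriv (deriv f) r = -(deriv f r / r) + ((n:ℝ) * (1 - a r) / r)^2 * f r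
      + lam / 2 * ((f r)^2 - 1) * f r := by have := hode1 r hr; linarith
  have hA2 : deriv (deriv a) r = deriv a r / r - (f r)^2 * (1 - a r) := by
    have := hode2 r hr; linarith
  have hF1ne : deriv f r ≠ 0 := hfne r hr
  simp only [Mop, lop]
  rw [E1, Eq2, E2, Eq1, Eg1, hF2, hA2]
  simp only [qfun]
  field_simp
  ring
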